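/- arXiv:1801.00097 — 9 statements merged into one kernel-verified Lean document; each statement's English description precedes it below -/
import Mathlib

section
/- In any distributive lattice, the entailment relation A ⊢ B defined on finite subsets by ⋀A ≤ ⋁B is reflexive ({a} ⊢ {a}), monotone (A ⊢ B, A ⊆ A', B ⊆ B' imply A' ⊢ B'), and transitive (A ∪ {x} ⊢ B and A ⊢ B ∪ {x} imply A ⊢ B). -/
theorem le_of_inf_le_of_le_sup {α : Type*} [DistribLattice α] {a b x : α}
    (h₁ : x ⊓ a ≤ b) (h₂ : a ≤ x ⊔ b) : a ≤ b :=
  calc a = a ⊓ (x ⊔ b) := (inf_eq_left.mpr h₂).symm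
    _ = (x ⊓ a) ⊔ (a ⊓ b) := by rw [inf_sup_left, inf_comm]
    _ ≤ b := sup_le h₁ inf_le_right

theorem Finset.inf_le_sup_of_cut {α : Type*} [DistribLattice α] [BoundedOrder α] [DecidableEq α]
    {A B : Finset α} {x : α} (h₁ : (insert x A).inf id ≤ B.sup id)
    (h₂ : A.inf id ≤ (insert x B).sup id) : A.inf id ≤ B.sup id := by
  rw [Finset.inf_insert] at h₁
  rw [Finset.sup_insert] at h₂
  exact le_of_inf_le_of_le_sup h₁ h₂

theorem entails_is_entailment_relation {L : Type*} [DistribLattice L] [BoundedOrder L] [DecidableEq L] :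
    (∀ a : L, ({a} : Finset L).inf id ≤ ({a} : Finset L).sup id) ∧
    (∀ A B A' B' : Finset L, A.inf id ≤ B.sup id → A ⊆ A' → B ⊆ B' →
      A'.inf id ≤ B'.sup id) ∧
    (∀ (A B : Finset L) (x : L), (insert x A).inf id ≤ B.sup id →
      A.inf id ≤ (insert x B).sup id → A.inf id ≤ B.sup id) :=
  ⟨fun a => by simp,
    fun _ _ _ _ h hA hB => (Finset.inf_mono hA).trans (h.trans (Finset.sup_mono hB)),
    fun _ _ _ => Finset.inf_le_sup_of_cut⟩
end

section
/- A distributive lattice L is of Krull dimension ≤ n−1 (i.e. there is no strictly increasing chain of prime ideals of length n) if and only if for all x₁,…,xₙ ∈ L there exist a₁,…,aₙ ∈ L such that a₁ ∧ x₁ = 0, aᵢ₊₁ ∧ xᵢ₊₁ ≤ aᵢ ∨ xᵢ for i = 1,…,n−1, and aₙ ∨ xₙ = 1. -/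
/-- A prime ideal of a bounded distributive lattice: an ideal (contains `⊥`, join-closed,
downward closed) with `⊤ ∉ I` and `x ⊓ y ∈ I → x ∈ I ∨ y ∈ I`. -/
def IsLatticePrimeIdeal {L : Type*} [DistribLattice L] [BoundedOrder L] (I : Set L) : Prop :=
  (⊥ ∈ I ∧ (∀ x y, x ∈ I → y ∈ I → x ⊔ y ∈ I) ∧ (∀ x y, x ∈ I → y ≤ x → y ∈ I)) ∧
  ⊤ ∉ I ∧ ∀ x y : L, x ⊓ y ∈ I → x ∈ I ∨ y ∈ I

/-!
Following Coquand and Lombardi, attach to `x₀, x₁, …` the iterated boundary ideals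
`B₀ = 0` and `B_{k+1} = (B_k : x_k) ∨ ↓x_k`. Unfolding the definition, `⊤ ∈ Bₙ` says exactly
that `x₀, …, x_{n-1}` has a complementary sequence `a`.

If `⊤ ∉ Bₙ`, some prime contains `Bₙ`. Whenever a prime `P` contains `B_{k+1}`, separating `B_k`
from the filter generated by `Pᶜ ∧ x_k` gives a prime `Q ⊆ P` containing `B_k` but not
`x_k ∈ P`; iterating yields a chain of primes of length `n`. Conversely, along a chain
`P₀ ⊊ ⋯ ⊊ Pₙ` pick `xᵢ ∈ P_{i+1} \ Pᵢ`; primality of `Pᵢ` gives inductively `aᵢ ∨ xᵢ ∈ P_{i+1}`,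
so `⊤ = a_{n-1} ∨ x_{n-1} ∈ Pₙ`.
-/

open Order Ideal

namespace Order.Ideal

variable {L : Type*}

def colon [DistribLattice L] (I : Ideal L) (x : L) : Ideal L where
  carrier := {a | a ⊓ x ∈ I}
  lower' _ _ hab ha := I.lower (inf_le_inf_right x hab) ha
  nonempty' := I.nonempty.imp fun _ hi => I.lower inf_le_left hi
  directed' a ha b hb :=
    ⟨a ⊔ b, show (a ⊔ b) ⊓ x ∈ I by rw [inf_sup_right]; exact sup_mem ha hb, le_sup_left,
      le_sup_right⟩

theorem IsPrime.isLatticePrimeIdeal [DistribLattice L] [BoundedOrder L] {J : Ideal L}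
    (hJ : J.IsPrime) : IsLatticePrimeIdeal (J : Set L) :=
  ⟨⟨bot_mem J, fun _ _ => sup_mem, fun _ _ hx hle => J.lower hle hx⟩,
    hJ.top_notMem, fun _ _ => hJ.mem_or_mem⟩

theorem exists_isPrime_le_of_colon_le [DistribLattice L] [BoundedOrder L] {I J : Ideal L}
    (hJ : J.IsPrime) {x : L} (h : I.colon x ≤ J) :
    ∃ Q : Ideal L, Q.IsPrime ∧ I ≤ Q ∧ Q ≤ J ∧ x ∉ Q := by
  have hF : IsPFilter {z | ∃ q ∉ J, q ⊓ x ≤ z} := by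
    refine .of_def ⟨⊤, ⊤, hJ.top_notMem, le_top⟩ ?_ ?_
    · rintro z₁ ⟨q₁, hq₁, h₁⟩ z₂ ⟨q₂, hq₂, h₂⟩
      refine ⟨z₁ ⊓ z₂, ⟨q₁ ⊓ q₂, fun hq => (hJ.mem_or_mem hq).elim hq₁ hq₂, ?_⟩,
        inf_le_left, inf_le_right⟩
      exact le_inf (le_trans (by gcongr; exact inf_le_left) h₁)
        (le_trans (by gcongr; exact inf_le_right) h₂)
    · rintro z₁ z₂ hz ⟨q, hq, h₁⟩
      exact ⟨q, hq, h₁.trans hz⟩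
  have hdisj : Disjoint (hF.toPFilter : Set L) I := by
    rw [Set.disjoint_left]
    rintro z ⟨q, hq, hqz⟩ hz
    exact hq (h (I.lower hqz hz))
  obtain ⟨Q, hQ, hIQ, hQF⟩ := DistribLattice.prime_ideal_of_disjoint_filter_ideal hdisj
  refine ⟨Q, hQ, hIQ, fun z hz => ?_, fun hx => ?_⟩
  · by_contra hzJ
    exact Set.disjoint_left.1 hQF (show z ∈ hF.toPFilter from ⟨z, hzJ, inf_le_left⟩) hz
  · exact Set.disjoint_left.1 hQF
      (show x ∈ hF.toPFilter from ⟨⊤, hJ.top_notMem, inf_le_right⟩) hx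

end Order.Ideal

section KrullBoundary

variable {L : Type*} [DistribLattice L] [BoundedOrder L]

def krullBoundary (x : ℕ → L) : ℕ → Ideal L
  | 0 => ⊥
  | k + 1 => (krullBoundary x k).colon (x k) ⊔ principal (x k)

theorem mem_krullBoundary_zero {x : ℕ → L} {z : L} : z ∈ krullBoundary x 0 ↔ z = ⊥ :=
  mem_principal.trans le_bot_iff

theorem mem_krullBoundary_succ {x : ℕ → L} {k : ℕ} {z : L} :
    z ∈ krullBoundary x (k + 1) ↔ ∃ a, a ⊓ x k ∈ krullBoundary x k ∧ z ≤ a ⊔ x k :=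
  Lattice.mem_ideal_sup_principal _ _ _

theorem exists_complementary_of_mem_krullBoundary {x : ℕ → L} {k : ℕ} {z : L}
    (h : z ∈ krullBoundary x (k + 1)) :
    ∃ a : ℕ → L, a 0 ⊓ x 0 = ⊥ ∧ (∀ i < k, a (i + 1) ⊓ x (i + 1) ≤ a i ⊔ x i) ∧
      z ≤ a k ⊔ x k := by
  induction k generalizing z with
  | zero =>
    obtain ⟨b, hb, hz⟩ := mem_krullBoundary_succ.1 h
    exact ⟨fun _ => b, mem_krullBoundary_zero.1 hb, fun _ hi => (Nat.not_lt_zero _ hi).elim, hz⟩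
  | succ k ih =>
    obtain ⟨b, hb, hz⟩ := mem_krullBoundary_succ.1 h
    obtain ⟨a, h₀, hstep, hk⟩ := ih hb
    refine ⟨Function.update a (k + 1) b, ?_, fun i hi => ?_, ?_⟩
    · rwa [Function.update_of_ne k.succ_ne_zero.symm]
    · rcases Nat.lt_succ_iff_lt_or_eq.1 hi with hi | rfl
      · rw [Function.update_of_ne (by omega), Function.update_of_ne (by omega)]
        exact hstep i hi
      · rwa [Function.update_self, Function.update_of_ne (by omega)]
    · rwa [Function.update_self]

theorem exists_ltSeries_of_krullBoundary_le (x : ℕ → L) (k : ℕ) {J : Ideal L} (hJ : J.IsPrime)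
    (h : krullBoundary x k ≤ J) :
    ∃ p : LTSeries (Ideal L), p.length = k ∧ (∀ Q ∈ p, Q.IsPrime) ∧ p.last = J := by
  induction k generalizing J with
  | zero => exact ⟨RelSeries.singleton _ J, rfl, fun _ ⟨_, hQ⟩ => hQ ▸ hJ, rfl⟩
  | succ k ih =>
    obtain ⟨Q, hQ, hBQ, hQJ, hxQ⟩ := exists_isPrime_le_of_colon_le hJ (le_sup_left.trans h)
    have hxJ : x k ∈ J := h ((le_sup_right : principal (x k) ≤ _) mem_principal_self)
    obtain ⟨p, hlen, hprime, hlast⟩ := ih hQ hBQ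
    refine ⟨p.snoc J (hlast ▸ hQJ.lt_of_not_ge fun hJQ => hxQ (hJQ hxJ)), by simp [hlen],
      fun P hP => ?_, by simp⟩
    rcases RelSeries.mem_snoc.1 hP with hP | rfl
    exacts [hprime P hP, hJ]

theorem exists_primeChain_of_top_notMem_krullBoundary {x : ℕ → L} {n : ℕ}
    (h : ⊤ ∉ krullBoundary x n) :
    ∃ P : Fin (n + 1) → Set L, (∀ i, IsLatticePrimeIdeal (P i)) ∧ StrictMono P := by
  obtain ⟨J, hBJ, hJ⟩ := (isProper_iff_top_notMem.2 h).exists_le_maximal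
  obtain ⟨p, rfl, hprime, -⟩ := exists_ltSeries_of_krullBoundary_le x n hJ.isPrime hBJ
  exact ⟨fun i => p i, fun i => (hprime _ ⟨i, rfl⟩).isLatticePrimeIdeal,
    SetLike.coe_strictMono.comp p.strictMono⟩

end KrullBoundary

section PrimeChain

variable {L : Type*} [DistribLattice L] [BoundedOrder L]

theorem IsLatticePrimeIdeal.sup_mem_of_inf_mem {P Q : Set L} (hP : IsLatticePrimeIdeal P)
    (hQ : IsLatticePrimeIdeal Q) (hPQ : P ⊆ Q) {a x : L} (hxQ : x ∈ Q) (hxP : x ∉ P)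
    (h : a ⊓ x ∈ P) : a ⊔ x ∈ Q :=
  hQ.1.2.1 _ _ (hPQ ((hP.2.2 _ _ h).resolve_right hxP)) hxQ

theorem sup_mem_of_complementary {n : ℕ} {P : Fin (n + 1) → Set L}
    (hP : ∀ i, IsLatticePrimeIdeal (P i)) (hPmono : Monotone P) {x a : Fin n → L}
    (hx : ∀ i, x i ∈ P i.succ ∧ x i ∉ P i.castSucc)
    (h₀ : ∀ j : Fin n, (j : ℕ) = 0 → a j ⊓ x j = ⊥)
    (hstep : ∀ i j : Fin n, (j : ℕ) = (i : ℕ) + 1 → a j ⊓ x j ≤ a i ⊔ x i) :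
    ∀ i : Fin n, a i ⊔ x i ∈ P i.succ := by
  have hsucc : ∀ i, a i ⊓ x i ∈ P i.castSucc → a i ⊔ x i ∈ P i.succ := fun i =>
    (hP _).sup_mem_of_inf_mem (hP _) (hPmono Fin.castSucc_lt_succ.le) (hx i).1 (hx i).2
  rintro ⟨i, hi⟩
  induction i with
  | zero => exact hsucc _ (h₀ ⟨0, hi⟩ rfl ▸ (hP _).1.1)
  | succ i ih =>
    exact hsucc _ ((hP _).1.2.2 _ _ (ih (by omega)) (hstep ⟨i, by omega⟩ ⟨i + 1, hi⟩ rfl))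

end PrimeChain

theorem lattice_krullDim_le_iff {L : Type*} [DistribLattice L] [BoundedOrder L]
    (n : ℕ) (hn : 0 < n) :
    (¬ ∃ P : Fin (n + 1) → Set L, (∀ i, IsLatticePrimeIdeal (P i)) ∧ StrictMono P) ↔
    (∀ x : Fin n → L, ∃ a : Fin n → L,
      (∀ j : Fin n, (j : ℕ) = 0 → a j ⊓ x j = ⊥) ∧
      (∀ i j : Fin n, (j : ℕ) = (i : ℕ) + 1 → a j ⊓ x j ≤ a i ⊔ x i) ∧
      (∀ j : Fin n, (j : ℕ) = n - 1 → a j ⊔ x j = ⊤)) := by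
  constructor
  · intro hchain x
    let x' : ℕ → L := fun k => if hk : k < n then x ⟨k, hk⟩ else ⊥
    have hx' : ∀ j : Fin n, x' j = x j := fun j => dif_pos j.isLt
    have htop : ⊤ ∈ krullBoundary x' n :=
      not_not.1 (mt exists_primeChain_of_top_notMem_krullBoundary hchain)
    obtain ⟨m, rfl⟩ : ∃ m, n = m + 1 := ⟨n - 1, by omega⟩
    obtain ⟨a, h₀, hstep, hlast⟩ := exists_complementary_of_mem_krullBoundary htop
    refine ⟨fun j => a j, fun j hj => ?_, fun i j hj => ?_, fun j hj => ?_⟩ <;>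
      simp only [← hx', hj]
    · exact h₀
    · exact hstep i (by omega)
    · exact top_le_iff.1 hlast
  · rintro hcomp ⟨P, hP, hPmono⟩
    choose x hx using fun i : Fin n =>
      Set.exists_of_ssubset (hPmono (Fin.castSucc_lt_succ (i := i)))
    obtain ⟨a, h₀, hstep, hlast⟩ := hcomp x
    have hmem := sup_mem_of_complementary hP hPmono.monotone hx h₀ hstep ⟨n - 1, by omega⟩
    rw [hlast _ rfl] at hmem
    exact (hP _).2.1 hmem
end

section
/- A bounded distributive lattice L has Krull dimension ≤ 0 (every strictly increasing chain of two prime ideals is impossible) if and only if L is a Boolean algebra, i.e., every element x ∈ L has a complement a with a ∧ x = 0 and a ∨ x = 1. -/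
/-!
If `x` has a complement `a`, then a prime ideal containing `a ⊓ x = ⊥` but not `x` contains `a`,
so any larger ideal containing `x` contains `a ⊔ x = ⊤`.

Conversely, if `x` has no complement, the ideal generated by `x` and its annihilator
`{y | y ⊓ x = ⊥}` is proper, hence lies in a prime ideal `P₁`. The filter generated by `x` and
the complement of `P₁` misses `⊥`, because `P₁` contains the annihilator of `x`; a prime ideal
`P₀` disjoint from that filter satisfies `P₀ ⊆ P₁` and `x ∉ P₀`.
-/

open Order Ideal

section

variable {L : Type*} [DistribLattice L] [BoundedOrder L]

theorem Order.Ideal.IsPrime.isLatticePrimeIdeal_s8 {P : Ideal L} (hP : P.IsPrime) :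
    IsLatticePrimeIdeal (P : Set L) :=
  ⟨⟨P.bot_mem, fun _ _ => P.sup_mem, fun _ _ hx hyx => P.lower hyx hx⟩,
    hP.toIsProper.top_notMem, fun _ _ => hP.mem_or_mem⟩

theorem IsLatticePrimeIdeal.mem_of_subset {P₀ P₁ : Set L} (hP₀ : IsLatticePrimeIdeal P₀)
    (hP₁ : IsLatticePrimeIdeal P₁) (hsub : P₀ ⊆ P₁) {a x : L} (hinf : a ⊓ x = ⊥)
    (hsup : a ⊔ x = ⊤) (hx : x ∈ P₁) : x ∈ P₀ := by
  by_contra hx₀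
  have ha : a ∈ P₀ := (hP₀.2.2 a x (hinf ▸ hP₀.1.1)).resolve_right hx₀
  exact hP₁.2.1 (hsup ▸ hP₁.1.2.1 a x (hsub ha) hx)

def Order.Ideal.annihilator (x : L) : Ideal L :=
  IsIdeal.toIdeal (I := {y | y ⊓ x = ⊥})
    { IsLowerSet := fun _ _ hba ha => le_bot_iff.1 (ha ▸ inf_le_inf_right x hba)
      Nonempty := ⟨⊥, bot_inf_eq x⟩
      Directed := fun a ha b hb =>
        ⟨a ⊔ b, by simp_all [inf_sup_right], le_sup_left, le_sup_right⟩ }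

theorem exists_isPrime_annihilator_le_of_not_complemented {x : L}
    (hx : ∀ a, a ⊓ x = ⊥ → a ⊔ x ≠ ⊤) :
    ∃ P : Ideal L, P.IsPrime ∧ annihilator x ≤ P ∧ x ∈ P := by
  have htop :
      Disjoint (PFilter.principal (⊤ : L) : Set L) ↑(annihilator x ⊔ principal x) := by
    refine Set.disjoint_left.2 fun z hz hzJ => ?_
    obtain ⟨j, hj, hjx⟩ := (Lattice.mem_ideal_sup_principal x z _).1 hzJ
    exact hx j hj (top_le_iff.1 ((PFilter.mem_principal.1 hz).trans hjx))
  obtain ⟨P, hP, hJP, -⟩ := DistribLattice.prime_ideal_of_disjoint_filter_ideal htop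
  exact ⟨P, hP, le_sup_left.trans hJP,
    hJP (le_sup_right (a := annihilator x) mem_principal_self)⟩

theorem Order.Ideal.IsPrime.isPFilter_setOf_exists_inf_le {P : Ideal L} (hP : P.IsPrime)
    (x : L) :
    IsPFilter {y | ∃ f ∉ P, f ⊓ x ≤ y} := by
  refine IsPFilter.of_def ⟨⊤, ⊤, hP.toIsProper.top_notMem, le_top⟩ ?_ ?_
  · rintro a ⟨f, hf, hfa⟩ b ⟨g, hg, hgb⟩
    refine ⟨a ⊓ b, ⟨f ⊓ g, fun hfg => (hP.mem_or_mem hfg).elim hf hg, ?_⟩,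
      inf_le_left, inf_le_right⟩
    exact le_inf ((inf_le_inf_right x inf_le_left).trans hfa)
      ((inf_le_inf_right x inf_le_right).trans hgb)
  · rintro a b hab ⟨f, hf, hfa⟩
    exact ⟨f, hf, hfa.trans hab⟩

theorem Order.Ideal.IsPrime.exists_isPrime_le_notMem {P : Ideal L} (hP : P.IsPrime) {x : L}
    (hann : annihilator x ≤ P) : ∃ Q : Ideal L, Q.IsPrime ∧ Q ≤ P ∧ x ∉ Q := by
  have hbot : Disjoint ((hP.isPFilter_setOf_exists_inf_le x).toPFilter : Set L)
      (principal (⊥ : L) : Set L) := by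
    refine Set.disjoint_left.2 fun z ⟨f, hf, hfz⟩ hz => hf (hann ?_)
    exact le_bot_iff.1 (hfz.trans (mem_principal.1 hz))
  obtain ⟨Q, hQ, -, hdisj⟩ := DistribLattice.prime_ideal_of_disjoint_filter_ideal hbot
  refine ⟨Q, hQ, fun y hy => ?_,
    Set.disjoint_left.1 hdisj ⟨⊤, hP.toIsProper.top_notMem, inf_le_right⟩⟩
  by_contra hyP
  exact Set.disjoint_left.1 hdisj ⟨y, hyP, inf_le_left⟩ hy

end

theorem lattice_dim_le_zero_iff_boolean {L : Type*} [DistribLattice L] [BoundedOrder L] :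
    (¬ ∃ P₀ P₁ : Set L, IsLatticePrimeIdeal P₀ ∧ IsLatticePrimeIdeal P₁ ∧ P₀ ⊂ P₁) ↔
    (∀ x : L, ∃ a : L, a ⊓ x = ⊥ ∧ a ⊔ x = ⊤) := by
  constructor
  · intro hdim x
    by_contra! hx
    obtain ⟨P₁, hP₁, hann, hxP₁⟩ := exists_isPrime_annihilator_le_of_not_complemented hx
    obtain ⟨P₀, hP₀, hle, hxP₀⟩ := hP₁.exists_isPrime_le_notMem hann
    exact hdim ⟨P₀, P₁, hP₀.isLatticePrimeIdeal_s8, hP₁.isLatticePrimeIdeal_s8,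
      ⟨hle, fun h => hxP₀ (h hxP₁)⟩⟩
  · rintro hcomp ⟨P₀, P₁, hP₀, hP₁, hsub, hnot⟩
    refine hnot fun x hx => ?_
    obtain ⟨a, hinf, hsup⟩ := hcomp x
    exact hP₀.mem_of_subset hP₁ hsub hinf hsup hx
end

section
/- A Heyting algebra L has Krull dimension ≤ n−1 if and only if for all x₁,…,xₙ ∈ L one has 1 = xₙ ∨ (xₙ → ( … (x₂ ∨ (x₂ → (x₁ ∨ ¬x₁))) … )). -/
/-!
Write `Kₖ` for the term built from `x₁, …, xₖ`, so `K₀ = 0` and `Kₖ₊₁ = xₖ₊₁ ∨ (xₖ₊₁ → Kₖ)`.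
Since `a ∧ y ≤ K` means `a ≤ y → K`, induction along any chain `a` gives `aₖ ∨ xₖ ≤ Kₖ`;
conversely `aₖ := xₖ → Kₖ₋₁` is a chain with `aₖ ∨ xₖ = Kₖ`. Hence a chain ending in
`aₙ ∨ xₙ = 1` exists if and only if `Kₙ = 1`.
-/

/-- The nested term `xₙ ∨ (xₙ → (⋯ (x₂ ∨ (x₂ → (x₁ ∨ ¬x₁))) ⋯))`, for the list
`[xₙ, …, x₁]` (head is outermost); note `x₁ ∨ ¬x₁ = x₁ ∨ (x₁ ⇨ ⊥)`. -/
def krullTerm {L : Type*} [HeytingAlgebra L] : List L → L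
  | [] => ⊥
  | x :: xs => x ⊔ (x ⇨ krullTerm xs)

section KrullSeq

variable {L : Type*} [HeytingAlgebra L]

def krullSeq (x : ℕ → L) : ℕ → L
  | 0 => ⊥
  | k + 1 => x k ⊔ (x k ⇨ krullSeq x k)

theorem krullTerm_reverse_ofFn (x : ℕ → L) (n : ℕ) :
    krullTerm (List.ofFn fun i : Fin n => x i).reverse = krullSeq x n := by
  induction n with
  | zero => rfl
  | succ n ih =>
    simp only [List.ofFn_succ', List.concat_eq_append, List.reverse_concat', Fin.val_last,
      Fin.val_castSucc, krullTerm, ih, krullSeq]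

theorem sup_le_sup_himp_of_inf_le {a y b : L} (h : a ⊓ y ≤ b) : a ⊔ y ≤ y ⊔ (y ⇨ b) :=
  sup_le (le_himp_iff.2 h |>.trans le_sup_right) le_sup_left

theorem sup_le_krullSeq {x a : ℕ → L} (h₀ : a 0 ⊓ x 0 = ⊥) {k : ℕ}
    (hstep : ∀ i < k, a (i + 1) ⊓ x (i + 1) ≤ a i ⊔ x i) : a k ⊔ x k ≤ krullSeq x (k + 1) := by
  induction k with
  | zero => exact sup_le_sup_himp_of_inf_le h₀.le
  | succ k ih =>
    have hprev := ih fun i hi => hstep i (hi.trans k.lt_succ_self)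
    exact sup_le_sup_himp_of_inf_le ((hstep k k.lt_succ_self).trans hprev)

theorem himp_krullSeq_sup (x : ℕ → L) (k : ℕ) :
    (x k ⇨ krullSeq x k) ⊔ x k = krullSeq x (k + 1) :=
  sup_comm _ _

end KrullSeq

theorem heyting_dim_le_iff {L : Type*} [HeytingAlgebra L] (n : ℕ) (hn : 0 < n) :
    (∀ x : Fin n → L, ∃ a : Fin n → L,
      (∀ j : Fin n, (j : ℕ) = 0 → a j ⊓ x j = ⊥) ∧
      (∀ i j : Fin n, (j : ℕ) = (i : ℕ) + 1 → a j ⊓ x j ≤ a i ⊔ x i) ∧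
      (∀ j : Fin n, (j : ℕ) = n - 1 → a j ⊔ x j = ⊤)) ↔
    (∀ x : Fin n → L, (⊤ : L) = krullTerm (List.ofFn x).reverse) := by
  obtain ⟨m, rfl⟩ := Nat.exists_eq_add_one_of_ne_zero hn.ne'
  have hval {k : ℕ} (hk : k ≤ m) : (Fin.ofNat (m + 1) k : ℕ) = k :=
    Nat.mod_eq_of_lt (Nat.lt_succ_of_le hk)
  have hterm (x : Fin (m + 1) → L) :
      krullTerm (List.ofFn x).reverse = krullSeq (fun k => x (Fin.ofNat _ k)) (m + 1) := by
    simp only [← krullTerm_reverse_ofFn, Fin.ofNat_val_eq_self]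
  simp only [Nat.add_sub_cancel, hterm, eq_comm (a := ⊤)]
  refine ⟨fun H x => ?_, fun H x => ?_⟩ <;> set X : ℕ → L := fun k => x (Fin.ofNat _ k)
  · obtain ⟨a, h₀, hstep, htop⟩ := H x
    refine top_le_iff.1 ?_
    calc ⊤ = a (Fin.ofNat _ m) ⊔ X m := (htop _ (hval le_rfl)).symm
      _ ≤ krullSeq X (m + 1) :=
        sup_le_krullSeq (a := fun k => a (Fin.ofNat _ k)) (h₀ _ (hval m.zero_le))
          fun i hi => hstep _ _ (by rw [hval (k := i + 1) hi, hval hi.le])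
  · have hsup (j : Fin (m + 1)) : (x j ⇨ krullSeq X j) ⊔ x j = krullSeq X (j + 1) := by
      simpa only [X, Fin.ofNat_val_eq_self] using himp_krullSeq_sup X j
    refine ⟨fun j => x j ⇨ krullSeq X j, fun j hj => ?_, fun i j hij => ?_, fun j hj => ?_⟩ <;>
      beta_reduce
    · rw [hj]
      exact le_bot_iff.1 himp_inf_le
    · rw [hij, ← hsup]
      exact himp_inf_le
    · rw [hsup, hj, H x]
end

section
/- The relation on finite subsets of a commutative ring R defined by U ⊢ J iff the multiplicative monoid generated by U meets the ideal generated by J satisfies the cut rule: if the monoid generated by U ∪ {a} meets ⟨J⟩ and the monoid generated by U meets ⟨J ∪ {a}⟩, then the monoid generated by U meets ⟨J⟩. -/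
theorem Submonoid.mem_closure_insert {M : Type*} [CommMonoid M] {a x : M} {s : Set M} :
    x ∈ closure (insert a s) ↔ ∃ n : ℕ, ∃ u ∈ closure s, a ^ n * u = x := by
  rw [Set.insert_eq, closure_union, mem_sup]
  simp_rw [mem_closure_singleton, exists_exists_eq_and]

/-- `x ≡ r * a` modulo `span s`, so `x ^ n * u ≡ r ^ n * (a ^ n * u)`. -/
theorem Ideal.pow_mul_mem_of_mem_span_insert {R : Type*} [CommRing R] {s : Set R} {a x u : R}
    {n : ℕ} (hx : x ∈ span (insert a s)) (h : a ^ n * u ∈ span s) : x ^ n * u ∈ span s := by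
  obtain ⟨r, z, hz, rfl⟩ := mem_span_insert.1 hx
  have hpow : (r * a + z) ^ n - (r * a) ^ n ∈ span s :=
    mem_of_dvd _ (sub_dvd_pow_sub_pow _ _ n) (by simpa using hz)
  convert add_mem (mul_mem_right u _ hpow) (mul_mem_left _ (r ^ n) h) using 1
  ring

theorem zariski_entailment_cut {R : Type*} [CommRing R] [DecidableEq R]
    (U J : Finset R) (a : R)
    (h1 : ∃ m ∈ Submonoid.closure ((insert a U : Finset R) : Set R),
      m ∈ Ideal.span (J : Set R))
    (h2 : ∃ m ∈ Submonoid.closure (U : Set R),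
      m ∈ Ideal.span ((insert a J : Finset R) : Set R)) :
    ∃ m ∈ Submonoid.closure (U : Set R), m ∈ Ideal.span (J : Set R) := by
  obtain ⟨m₁, hm₁U, hm₁J⟩ := h1
  obtain ⟨m₂, hm₂U, hm₂J⟩ := h2
  rw [Finset.coe_insert] at hm₁U hm₂J
  obtain ⟨n, u, hu, rfl⟩ := Submonoid.mem_closure_insert.1 hm₁U
  exact ⟨m₂ ^ n * u, mul_mem (pow_mem hm₂U n) hu, Ideal.pow_mul_mem_of_mem_span_insert hm₂J hm₁J⟩
end

section
/- For a commutative ring R, radical ideals of R are in order-preserving bijection with ideals of the Zariski lattice Zar(R), via I ↦ {J ∈ Zar(R) | J ⊆ I} and inversely 𝓘 ↦ {x ∈ R | √⟨x⟩ ∈ 𝓘}; under this bijection prime ideals of R correspond to prime ideals of Zar(R). -/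
/-- The Zariski lattice of `R`, as the set of radicals of finitely generated ideals. -/
def ZarSet (R : Type*) [CommRing R] : Set (Ideal R) :=
  {I | ∃ J : Finset R, I = (Ideal.span (J : Set R)).radical}

/-- An ideal of the Zariski lattice (ordered by inclusion, with join `√(I + J)`
and bottom `√0`). -/
def IsZarIdeal {R : Type*} [CommRing R] (𝓘 : Set (Ideal R)) : Prop :=
  𝓘 ⊆ ZarSet R ∧ (⊥ : Ideal R).radical ∈ 𝓘 ∧
  (∀ I J : Ideal R, I ∈ 𝓘 → J ∈ 𝓘 → (I ⊔ J).radical ∈ 𝓘) ∧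
  (∀ I J : Ideal R, I ∈ ZarSet R → J ∈ 𝓘 → I ≤ J → I ∈ 𝓘)

/-- A prime ideal of the Zariski lattice: a proper ideal such that
`√(I·J) ∈ 𝓘` implies `I ∈ 𝓘` or `J ∈ 𝓘` (the meet of `√I` and `√J` is `√(I·J)`). -/
def IsZarPrimeIdeal {R : Type*} [CommRing R] (𝓘 : Set (Ideal R)) : Prop :=
  IsZarIdeal 𝓘 ∧ 𝓘 ≠ ZarSet R ∧
  ∀ I J : Ideal R, I ∈ ZarSet R → J ∈ ZarSet R → (I * J).radical ∈ 𝓘 →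
    I ∈ 𝓘 ∨ J ∈ 𝓘

/-- The Zariski-lattice ideal associated to a radical ideal `I` of `R`. -/
def zarDown {R : Type*} [CommRing R] (I : Ideal R) : Set (Ideal R) :=
  {J | J ∈ ZarSet R ∧ J ≤ I}

/-- The set of elements of `R` associated to an ideal `𝓘` of the Zariski lattice. -/
def zarUp {R : Type*} [CommRing R] (𝓘 : Set (Ideal R)) : Set R :=
  {x | (Ideal.span {x}).radical ∈ 𝓘}

/-! An ideal `𝓘` of `Zar(R)` is determined by the elements `x` with `√⟨x⟩ ∈ 𝓘`: every element of
`Zar(R)` is a finite join `√⟨s₁, …, sₙ⟩ = √⟨s₁⟩ ∨ ⋯ ∨ √⟨sₙ⟩` of principal ones, and since it is a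
radical ideal, `√⟨x⟩ ≤ J` exactly when `x ∈ J`. Closure of `𝓘` under joins and downward closure
make `{x | √⟨x⟩ ∈ 𝓘}` a radical ideal of `R`, and the two maps are mutually inverse.
Primality matches because the meet `√⟨x⟩ ∧ √⟨y⟩` is `√⟨xy⟩`. -/

open Ideal

section

variable {R : Type*} [CommRing R]

lemma isRadical_of_mem_zarSet {I : Ideal R} (hI : I ∈ ZarSet R) : I.IsRadical := by
  obtain ⟨S, rfl⟩ := hI
  exact radical_isRadical _

lemma radical_span_singleton_mem_zarSet (x : R) : (span {x}).radical ∈ ZarSet R :=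
  ⟨{x}, by simp⟩

lemma top_mem_zarSet : (⊤ : Ideal R) ∈ ZarSet R :=
  ⟨{1}, by simp [radical_top]⟩

lemma radical_sup_mem_zarSet {I J : Ideal R} (hI : I ∈ ZarSet R) (hJ : J ∈ ZarSet R) :
    (I ⊔ J).radical ∈ ZarSet R := by
  classical
  obtain ⟨S, rfl⟩ := hI
  obtain ⟨T, rfl⟩ := hJ
  refine ⟨S ∪ T, ?_⟩
  rw [← radical_sup, Finset.coe_union, span_union]

lemma radical_span_singleton_le_iff {I : Ideal R} (hI : I.IsRadical) (x : R) :
    (span {x}).radical ≤ I ↔ x ∈ I := by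
  rw [hI.radical_le_iff, span_singleton_le_iff_mem]

lemma radical_mul_radical_span_singleton (x y : R) :
    ((span {x}).radical * (span {y}).radical).radical = (span {x * y}).radical := by
  rw [radical_mul, radical_idem, radical_idem, ← radical_mul, span_singleton_mul_span_singleton]

lemma radical_span_singleton_mem_zarDown_iff {I : Ideal R} (hI : I.IsRadical) (x : R) :
    (span {x}).radical ∈ zarDown I ↔ x ∈ I :=
  (and_iff_right (radical_span_singleton_mem_zarSet x)).trans (radical_span_singleton_le_iff hI x)

lemma zarUp_zarDown {I : Ideal R} (hI : I.IsRadical) : zarUp (zarDown I) = (I : Set R) :=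
  Set.ext (radical_span_singleton_mem_zarDown_iff hI)

lemma zarDown_mono {I I' : Ideal R} (h : I ≤ I') : zarDown I ⊆ zarDown I' :=
  fun _ hJ => ⟨hJ.1, hJ.2.trans h⟩

lemma zarDown_subset_zarDown_iff {I I' : Ideal R} (hI : I.IsRadical) (hI' : I'.IsRadical) :
    zarDown I ⊆ zarDown I' ↔ I ≤ I' := by
  refine ⟨fun h => ?_, zarDown_mono⟩
  rw [← SetLike.coe_subset_coe, ← zarUp_zarDown hI, ← zarUp_zarDown hI']
  exact fun _ hx => h hx

lemma zarDown_eq_zarSet_iff {I : Ideal R} : zarDown I = ZarSet R ↔ I = ⊤ := by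
  refine ⟨fun h => top_le_iff.1 (h ▸ top_mem_zarSet : (⊤ : Ideal R) ∈ zarDown I).2, ?_⟩
  rintro rfl
  exact Set.ext fun J => and_iff_left le_top

lemma isZarIdeal_zarDown {I : Ideal R} (hI : I.IsRadical) : IsZarIdeal (zarDown I) := by
  refine ⟨fun J hJ => hJ.1, ⟨⟨∅, by simp⟩, hI.radical_le_iff.2 bot_le⟩, ?_, ?_⟩
  · rintro J K ⟨hJz, hJI⟩ ⟨hKz, hKI⟩
    exact ⟨radical_sup_mem_zarSet hJz hKz, hI.radical_le_iff.2 (sup_le hJI hKI)⟩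
  · rintro J K hJz hK hJK
    exact ⟨hJz, hJK.trans hK.2⟩

lemma isPrime_iff_isZarPrimeIdeal_zarDown {I : Ideal R} (hI : I.IsRadical) :
    I.IsPrime ↔ IsZarPrimeIdeal (zarDown I) := by
  rw [IsZarPrimeIdeal, Ne, zarDown_eq_zarSet_iff, Ideal.isPrime_iff,
    and_iff_right (isZarIdeal_zarDown hI)]
  refine and_congr_right fun hne => ⟨fun hprime J K hJz hKz hJK => ?_, fun hprime x y hxy => ?_⟩
  · have hP : I.IsPrime := Ideal.isPrime_iff.2 ⟨hne, hprime⟩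
    rcases hP.mul_le.1 (le_radical.trans hJK.2) with hJ | hK
    exacts [Or.inl ⟨hJz, hJ⟩, Or.inr ⟨hKz, hK⟩]
  · simp only [← radical_span_singleton_mem_zarDown_iff hI] at hxy ⊢
    rw [← radical_mul_radical_span_singleton] at hxy
    exact hprime _ _ (radical_span_singleton_mem_zarSet x) (radical_span_singleton_mem_zarSet y) hxy

namespace IsZarIdeal

variable {𝓘 : Set (Ideal R)}

lemma mem_zarUp_of_mem (h : IsZarIdeal 𝓘) {J : Ideal R} (hJ : J ∈ 𝓘) {x : R} (hx : x ∈ J) :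
    x ∈ zarUp 𝓘 :=
  h.2.2.2 _ J (radical_span_singleton_mem_zarSet x) hJ
    ((radical_span_singleton_le_iff (isRadical_of_mem_zarSet (h.1 hJ)) x).2 hx)

lemma radical_span_mem (h : IsZarIdeal 𝓘) (S : Finset R) (hS : (S : Set R) ⊆ zarUp 𝓘) :
    (span (S : Set R)).radical ∈ 𝓘 := by
  classical
  induction S using Finset.induction_on with
  | empty => simpa using h.2.1
  | insert a S _ ih =>
    rw [Finset.coe_insert] at hS ⊢
    rw [Set.insert_eq, span_union, radical_sup]
    exact h.2.2.1 _ _ (hS (Set.mem_insert a _)) (ih ((Set.subset_insert a _).trans hS))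

lemma mem_iff_subset_zarUp (h : IsZarIdeal 𝓘) {J : Ideal R} (hJ : J ∈ ZarSet R) :
    J ∈ 𝓘 ↔ (J : Set R) ⊆ zarUp 𝓘 := by
  refine ⟨fun hJ𝓘 x hx => h.mem_zarUp_of_mem hJ𝓘 hx, fun hsub => ?_⟩
  obtain ⟨S, rfl⟩ := hJ
  exact h.radical_span_mem S fun s hs => hsub (le_radical (subset_span hs))

def toIdeal (h : IsZarIdeal 𝓘) : Ideal R where
  carrier := zarUp 𝓘
  zero_mem' := h.mem_zarUp_of_mem h.2.1 (zero_mem _)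
  add_mem' {x} {y} hx hy := h.mem_zarUp_of_mem (h.2.2.1 _ _ hx hy)
    (le_radical (add_mem (mem_sup_left (le_radical (mem_span_singleton_self x)))
      (mem_sup_right (le_radical (mem_span_singleton_self y)))))
  smul_mem' r x hx := h.mem_zarUp_of_mem hx
    (le_radical (mem_span_singleton.2 ⟨r, mul_comm r x⟩))

lemma coe_toIdeal (h : IsZarIdeal 𝓘) : (h.toIdeal : Set R) = zarUp 𝓘 := rfl

lemma isRadical_toIdeal (h : IsZarIdeal 𝓘) : h.toIdeal.IsRadical :=
  fun _ ⟨n, hxn⟩ => h.mem_zarUp_of_mem hxn ⟨n, mem_span_singleton_self _⟩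

lemma zarDown_eq (h : IsZarIdeal 𝓘) {I : Ideal R} (hI : (I : Set R) = zarUp 𝓘) :
    zarDown I = 𝓘 := by
  ext J
  refine ⟨fun ⟨hJz, hJI⟩ => (h.mem_iff_subset_zarUp hJz).2 (hI ▸ hJI), fun hJ => ?_⟩
  have hJz := h.1 hJ
  exact ⟨hJz, SetLike.coe_subset_coe.1 (hI ▸ (h.mem_iff_subset_zarUp hJz).1 hJ)⟩

end IsZarIdeal

end

theorem radical_ideals_correspond_to_zariski_ideals {R : Type*} [CommRing R] :
    (∀ I : Ideal R, I.IsRadical → IsZarIdeal (zarDown I)) ∧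
    (∀ 𝓘 : Set (Ideal R), IsZarIdeal 𝓘 →
      ∃ I : Ideal R, I.IsRadical ∧ (I : Set R) = zarUp 𝓘) ∧
    (∀ I : Ideal R, I.IsRadical → zarUp (zarDown I) = (I : Set R)) ∧
    (∀ 𝓘 : Set (Ideal R), IsZarIdeal 𝓘 → ∀ I : Ideal R,
      (I : Set R) = zarUp 𝓘 → zarDown I = 𝓘) ∧
    (∀ I I' : Ideal R, I.IsRadical → I'.IsRadical →
      (I ≤ I' ↔ zarDown I ⊆ zarDown I')) ∧
    (∀ I : Ideal R, I.IsRadical → (I.IsPrime ↔ IsZarPrimeIdeal (zarDown I))) :=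
  ⟨fun _ => isZarIdeal_zarDown,
   fun _ h => ⟨h.toIdeal, h.isRadical_toIdeal, h.coe_toIdeal⟩,
   fun _ => zarUp_zarDown,
   fun _ h _ => h.zarDown_eq,
   fun _ _ hI hI' => (zarDown_subset_zarDown_iff hI hI').symm,
   fun _ => isPrime_iff_isZarPrimeIdeal_zarDown⟩
end

section
/- A commutative ring R has Krull dimension ≤ n−1 if and only if for every sequence x₁,…,xₙ ∈ R there exist a₁,…,aₙ ∈ R and m₁,…,mₙ ∈ ℕ such that x₁^{m₁}·( … ·(xₙ^{mₙ}·(1 + aₙxₙ) + … ) + a₁x₁) = 0. -/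
/-- The nested expression `x₁^{m₁}(⋯(xₙ^{mₙ}(1 + aₙxₙ) + ⋯) + a₁x₁)` for the list
`[(x₁,a₁,m₁), …, (xₙ,aₙ,mₙ)]`. -/
def nestedExpr {R : Type*} [CommRing R] : List (R × R × ℕ) → R
  | [] => 1
  | (x, a, m) :: t => x ^ m * (nestedExpr t + a * x)

/-!
Given a chain `P₀ < ⋯ < Pₙ` of primes and `xᵢ ∈ Pᵢ \ Pᵢ₋₁`, the nested expression can never
vanish: reading it from the outside in, `x₁ ∉ P₀` forces `y₂ + a₁x₁ ∈ P₀ ⊆ P₁`, hence `y₂ ∈ P₁`,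
and so on up to `1 ∈ Pₙ`.

Conversely, if no nested expression in `x₁, …, xₙ` lies in an ideal `I`, then none in
`x₂, …, xₙ` lies in `I' = (I : x₁^∞) + (x₁)`, so by induction there is a chain of primes
`P₁ < ⋯ < Pₙ` above `I'`. A prime maximal among those containing `I` and avoiding the
multiplicative set `x₁^ℕ · (R \ P₁)` lies strictly below `P₁` and extends the chain.
-/

namespace Ideal

variable {R : Type*} [CommSemiring R]

def saturation (I : Ideal R) (x : R) : Ideal R :=
  (I.map (algebraMap R (Localization.Away x))).comap (algebraMap R (Localization.Away x))

theorem mem_saturation {I : Ideal R} {x r : R} : r ∈ I.saturation x ↔ ∃ k, x ^ k * r ∈ I := by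
  simp [saturation, mem_comap,
    IsLocalization.algebraMap_mem_map_algebraMap_iff (Submonoid.powers x), Submonoid.mem_powers_iff]

theorem exists_isPrime_le_lt_of_saturation_le {I P : Ideal R} [P.IsPrime] {x : R}
    (hsat : I.saturation x ≤ P) (hx : x ∈ P) : ∃ Q : Ideal R, Q.IsPrime ∧ I ≤ Q ∧ Q < P := by
  have hdisj : Disjoint (I : Set R) (Submonoid.powers x ⊔ P.primeCompl : Submonoid R) := by
    rw [Set.disjoint_right]
    rintro _ hy hyI
    obtain ⟨_, ⟨k, rfl⟩, s, hs, rfl⟩ := Submonoid.mem_sup.mp hy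
    exact hs (hsat (mem_saturation.mpr ⟨k, hyI⟩))
  obtain ⟨Q, hQ, hIQ, hQdisj⟩ := exists_le_prime_disjoint I _ hdisj
  have hQP : Q ≤ P := fun y hyQ ↦ by_contra fun hyP ↦
    Set.disjoint_left.mp hQdisj hyQ (Submonoid.mem_sup_right (mem_primeCompl_iff.mpr hyP))
  have hxQ : x ∉ Q := fun hxQ ↦
    Set.disjoint_left.mp hQdisj hxQ (Submonoid.mem_sup_left (Submonoid.mem_powers x))
  exact ⟨Q, hQ, hIQ, SetLike.lt_iff_le_and_exists.mpr ⟨hQP, x, hx, hxQ⟩⟩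

end Ideal

section NestedExpr

variable {R : Type*} [CommRing R]

theorem nestedExpr_ofFn_succ {n : ℕ} (x a : Fin (n + 1) → R) (m : Fin (n + 1) → ℕ) :
    nestedExpr (List.ofFn fun i ↦ (x i, a i, m i)) =
      x 0 ^ m 0 * (nestedExpr (List.ofFn fun i ↦ (x i.succ, a i.succ, m i.succ)) + a 0 * x 0) := by
  rw [List.ofFn_succ]
  rfl

theorem mem_of_pow_mul_add_mul_mem {P Q : Ideal R} [P.IsPrime] {x e a : R} {m : ℕ}
    (hPQ : P ≤ Q) (hxP : x ∉ P) (hxQ : x ∈ Q) (h : x ^ m * (e + a * x) ∈ P) : e ∈ Q := by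
  have hP : e + a * x ∈ P :=
    (‹P.IsPrime›.mem_or_mem h).resolve_left fun hx ↦ hxP (‹P.IsPrime›.mem_of_pow_mem m hx)
  simpa using sub_mem (hPQ hP) (Q.mul_mem_left a hxQ)

theorem nestedExpr_notMem_of_monotone {n : ℕ} (Q : Fin (n + 1) → Ideal R)
    (hQ : ∀ i, (Q i).IsPrime) (hmono : Monotone Q) (x : Fin n → R)
    (hxQ : ∀ i, x i ∈ Q i.succ) (hxQ' : ∀ i, x i ∉ Q i.castSucc) (a : Fin n → R) (m : Fin n → ℕ) :
    nestedExpr (List.ofFn fun i ↦ (x i, a i, m i)) ∉ Q 0 := by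
  induction n with
  | zero =>
    rw [List.ofFn_zero]
    exact (Q 0).ne_top_iff_one.mp (hQ 0).ne_top
  | succ n ih =>
    rw [nestedExpr_ofFn_succ]
    intro h
    exact ih (fun i ↦ Q i.succ) (fun i ↦ hQ i.succ) (hmono.comp Fin.strictMono_succ.monotone)
      (fun i ↦ x i.succ) (fun i ↦ hxQ i.succ)
      (fun i ↦ Fin.succ_castSucc i ▸ hxQ' i.succ) (fun i ↦ a i.succ) (fun i ↦ m i.succ)
      (mem_of_pow_mul_add_mul_mem (hmono (Fin.zero_le 1)) (hxQ' 0) (hxQ 0) h)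

theorem nestedExpr_ofFn_tail_notMem {n : ℕ} {I : Ideal R} {x : Fin (n + 1) → R}
    (h : ∀ (a : Fin (n + 1) → R) (m : Fin (n + 1) → ℕ),
      nestedExpr (List.ofFn fun i ↦ (x i, a i, m i)) ∉ I) (a : Fin n → R)
    (m : Fin n → ℕ) :
    nestedExpr (List.ofFn fun i ↦ (x i.succ, a i, m i)) ∉
      Ideal.span {x 0} ⊔ I.saturation (x 0) := by
  intro hmem
  obtain ⟨c, b, hb, hcb⟩ := Ideal.mem_span_singleton_sup.mp hmem
  obtain ⟨k, hk⟩ := Ideal.mem_saturation.mp hb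
  apply h (Fin.cons (-c) a) (Fin.cons k m)
  rw [nestedExpr_ofFn_succ]
  simpa [← hcb] using hk

theorem exists_primeChain_of_nestedExpr_notMem {n : ℕ} (x : Fin n → R) (I : Ideal R)
    (h : ∀ (a : Fin n → R) (m : Fin n → ℕ), nestedExpr (List.ofFn fun i ↦ (x i, a i, m i)) ∉ I) :
    ∃ P : Fin (n + 1) → Ideal R, (∀ i, (P i).IsPrime) ∧ StrictMono P ∧ I ≤ P 0 := by
  induction n generalizing I with
  | zero =>
    have hI : I ≠ ⊤ := I.ne_top_iff_one.mpr (by simpa [nestedExpr] using h 0 0)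
    obtain ⟨M, hM, hIM⟩ := I.exists_le_maximal hI
    exact ⟨fun _ ↦ M, fun _ ↦ hM.isPrime, Subsingleton.strictMono (α := Fin 1) _, hIM⟩
  | succ n ih =>
    obtain ⟨P, hP, hPmono, hIP⟩ := ih (fun i ↦ x i.succ) _ (nestedExpr_ofFn_tail_notMem h)
    have : (P 0).IsPrime := hP 0
    obtain ⟨Q, hQ, hIQ, hQP⟩ := Ideal.exists_isPrime_le_lt_of_saturation_le
      (le_sup_right.trans hIP) (hIP (Ideal.mem_sup_left (Ideal.mem_span_singleton_self _)))
    exact ⟨Matrix.vecCons Q P, Fin.cases hQ hP, strictMono_vecCons.mpr ⟨hQP, hPmono⟩, hIQ⟩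

end NestedExpr

theorem ring_krullDim_le_iff {R : Type*} [CommRing R] (n : ℕ) :
    (¬ ∃ P : Fin (n + 1) → Ideal R, (∀ i, (P i).IsPrime) ∧ StrictMono P) ↔
    (∀ x : Fin n → R, ∃ a : Fin n → R, ∃ m : Fin n → ℕ,
      nestedExpr (List.ofFn (fun i => (x i, a i, m i))) = 0) := by
  constructor
  · intro hdim x
    by_contra! hx
    obtain ⟨P, hP, hPmono, -⟩ := exists_primeChain_of_nestedExpr_notMem x ⊥
      fun a m ↦ by simpa using hx a m
    exact hdim ⟨P, hP, hPmono⟩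
  · rintro hnested ⟨P, hP, hPmono⟩
    choose x hxP hxP' using fun i : Fin n ↦ SetLike.exists_of_lt (hPmono i.castSucc_lt_succ)
    obtain ⟨a, m, hzero⟩ := hnested x
    exact nestedExpr_notMem_of_monotone P hP hPmono.monotone x hxP hxP' a m
      (hzero ▸ (P 0).zero_mem)
end

section
/- Let K be a field, R a commutative K-algebra, and x₁,…,xₙ ∈ R algebraically dependent over K. Then the sequence x₁,…,xₙ is singular: there exist a₁,…,aₙ ∈ R and m₁,…,mₙ ∈ ℕ with x₁^{m₁}·( … ·(xₙ^{mₙ}·(1 + aₙxₙ) + … ) + a₁x₁) = 0. -/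
/-!
Expand `Q` in the first variable: `Q = X₀ ^ k * (Q₀(X₁, …, Xₙ) + X₀ * Q₁)` with `Q₀ ≠ 0`.
By induction on the number of variables, some scalar multiple `c • Q₀(x₂, …, xₙ)` is a nested
expression in `x₂, …, xₙ`; taking `a₁ = c • Q₁(x)` and `m₁ = k` then makes `c • Q(x)` a nested
expression in `x₁, …, xₙ`. If `Q(x) = 0`, that nested expression vanishes.
-/

open MvPolynomial

theorem MvPolynomial.finSuccEquiv_rename_succ {S : Type*} [CommSemiring S] {n : ℕ}
    (p : MvPolynomial (Fin n) S) :
    finSuccEquiv S n (rename Fin.succ p) = Polynomial.C p := by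
  induction p using MvPolynomial.induction_on with
  | C a => simp [finSuccEquiv_apply]
  | add p q hp hq => simp [hp, hq]
  | mul_X p j hp => simp [hp, finSuccEquiv_X_succ]

theorem MvPolynomial.exists_eq_X_zero_pow_mul_rename_succ_add_X_zero_mul
    {S : Type*} [CommSemiring S] {n : ℕ} {Q : MvPolynomial (Fin (n + 1)) S} (hQ : Q ≠ 0) :
    ∃ (k : ℕ) (Q₀ : MvPolynomial (Fin n) S) (Q₁ : MvPolynomial (Fin (n + 1)) S),
      Q₀ ≠ 0 ∧ Q = X 0 ^ k * (rename Fin.succ Q₀ + X 0 * Q₁) := by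
  set P := finSuccEquiv S n Q
  obtain ⟨P₁, hP⟩ : Polynomial.X ^ P.natTrailingDegree ∣ P :=
    Polynomial.X_pow_dvd_iff.mpr fun d hd => Polynomial.coeff_eq_zero_of_lt_natTrailingDegree hd
  have hP₁ : P₁.coeff 0 ≠ 0 := by
    have hcoeff := Polynomial.coeff_X_pow_mul P₁ P.natTrailingDegree 0
    rw [zero_add, ← hP] at hcoeff
    rw [← hcoeff]
    exact Polynomial.trailingCoeff_nonzero_iff_nonzero.mpr
      ((map_ne_zero_iff _ (finSuccEquiv S n).injective).mpr hQ)
  refine ⟨P.natTrailingDegree, P₁.coeff 0, (finSuccEquiv S n).symm P₁.divX, hP₁, ?_⟩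
  apply (finSuccEquiv S n).injective
  simp only [map_mul, map_pow, map_add, finSuccEquiv_X_zero, finSuccEquiv_rename_succ,
    AlgEquiv.apply_symm_apply]
  rw [add_comm (Polynomial.C _), Polynomial.X_mul_divX_add]
  exact hP

theorem exists_nestedExpr_eq_smul_aeval {K R : Type*} [Field K] [CommRing R] [Algebra K R] :
    ∀ {n : ℕ} (x : Fin n → R) {Q : MvPolynomial (Fin n) K}, Q ≠ 0 →
      ∃ (a : Fin n → R) (m : Fin n → ℕ) (c : K),
        nestedExpr (List.ofFn fun i => (x i, a i, m i)) = c • aeval x Q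
  | 0, x, Q, hQ => by
    rw [eq_C_of_isEmpty Q] at hQ ⊢
    refine ⟨Fin.elim0, Fin.elim0, (coeff 0 Q)⁻¹, ?_⟩
    rw [aeval_C, Algebra.smul_def, ← map_mul, inv_mul_cancel₀ (by simpa using hQ), map_one]
    rfl
  | n + 1, x, Q, hQ => by
    obtain ⟨k, Q₀, Q₁, hQ₀, rfl⟩ := exists_eq_X_zero_pow_mul_rename_succ_add_X_zero_mul hQ
    obtain ⟨a, m, c, ha⟩ := exists_nestedExpr_eq_smul_aeval (fun i => x i.succ) hQ₀
    refine ⟨Fin.cons (c • aeval x Q₁) a, Fin.cons k m, c, ?_⟩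
    rw [List.ofFn_succ]
    simp only [nestedExpr, Fin.cons_zero, Fin.cons_succ, ha, map_mul, map_pow, map_add, aeval_X,
      aeval_rename, Function.comp_def, Algebra.smul_def]
    ring

theorem algebraically_dependent_is_singular {K R : Type*} [Field K] [CommRing R]
    [Algebra K R] (n : ℕ) (x : Fin n → R)
    (hdep : ∃ Q : MvPolynomial (Fin n) K, Q ≠ 0 ∧ MvPolynomial.aeval x Q = 0) :
    ∃ a : Fin n → R, ∃ m : Fin n → ℕ,
      nestedExpr (List.ofFn (fun i => (x i, a i, m i))) = 0 := by
  obtain ⟨Q, hQ, hQx⟩ := hdep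
  obtain ⟨a, m, c, h⟩ := exists_nestedExpr_eq_smul_aeval x hQ
  exact ⟨a, m, by rw [h, hQx, smul_zero]⟩
end

section
/- In the polynomial ring K[X₁,…,Xₙ] over a field K, the sequence X₁,…,Xₙ is pseudo regular: there do not exist a₁,…,aₙ ∈ K[X₁,…,Xₙ] and m₁,…,mₙ ∈ ℕ such that X₁^{m₁}(⋯(Xₙ^{mₙ}(1 + aₙXₙ) + ⋯) + a₁X₁) = 0. -/
open MvPolynomial

theorem map_nestedExpr {R S : Type*} [CommRing R] [CommRing S] (f : R →+* S)
    (L : List (R × R × ℕ)) :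
    f (nestedExpr L) = nestedExpr (L.map fun p => (f p.1, f p.2.1, p.2.2)) := by
  induction L with
  | nil => simp [nestedExpr]
  | cons p t ih => simp [nestedExpr, ih]

theorem nestedExpr_X_ne_zero {R σ : Type*} [CommRing R] [Nontrivial R] {l : List σ}
    (hl : l.Nodup) (a : σ → MvPolynomial σ R) (m : σ → ℕ) :
    nestedExpr (l.map fun i => (X i, a i, m i)) ≠ 0 := by
  classical
  induction l generalizing a with
  | nil => simp [nestedExpr]
  | cons i t ih =>
    obtain ⟨hit, ht⟩ := List.nodup_cons.mp hl
    intro h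
    rw [List.map_cons, nestedExpr, (isRegular_X_pow (m i)).left.mul_left_eq_zero_iff] at h
    let substZero : MvPolynomial σ R →+* MvPolynomial σ R :=
      (aeval (Function.update X i (0 : MvPolynomial σ R))).toRingHom
    have substZero_X (j : σ) (hj : j ∈ t) : substZero (X j) = X j := by
      have hji : j ≠ i := fun e => hit (e ▸ hj)
      simp [substZero, Function.update_of_ne hji]
    have hkill := congrArg substZero h
    simp only [map_add, map_mul, map_zero, map_nestedExpr, List.map_map] at hkill
    rw [show substZero (X i) = 0 by simp [substZero], mul_zero, add_zero] at hkill
    refine ih ht (fun j => substZero (a j)) (Eq.trans ?_ hkill)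
    exact congrArg nestedExpr (List.map_congr_left fun j hj => by simp [substZero_X j hj])

theorem variables_pseudo_regular {K : Type*} [Field K] (n : ℕ) :
    ¬ (∃ a : Fin n → MvPolynomial (Fin n) K, ∃ m : Fin n → ℕ,
        nestedExpr (List.ofFn (fun i => (MvPolynomial.X i, a i, m i))) = 0) := by
  rintro ⟨a, m, h⟩
  rw [List.ofFn_eq_map] at h
  exact nestedExpr_X_ne_zero (List.nodup_finRange n) a m h
end
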